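/- arXiv:1005.4947 — 3 statements merged into one kernel-verified Lean document; each statement's English description precedes it below -/
import Mathlib

section
/- For every nonnegative integer m and every real number u with u > 0 and u ≠ 1, the improper integral ∫₀^∞ xᵐ / ((x+1)^(m+1) (xu+1)) dx converges and equals (-1)^m (u-1)^(-(m+1)) ( log u - ∑_{j=1}^{m} (-1)^(j+1) (u-1)^j / j ). -/
/-!
Put `t(x) = (u - 1) x / (x + 1)`, which moves monotonically from `0` towards `u - 1` on `[0, ∞)`, with
`1 + t = (xu + 1)/(x + 1)` and `t' = (u - 1)/(x + 1)²`. The remainder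
`R_m(t) = log (1 + t) - ∑_{j=1}^m (-1)^(j+1) t^j / j` of the Taylor expansion of `log (1 + t)` has
derivative `(-t)^m / (1 + t)`, so by the chain rule `(-1)^m (u - 1)^(-(m+1)) R_m(t(x))` is an
antiderivative of the nonnegative integrand. It vanishes at `0` and tends to `𝓛_m(u)` at `∞`.
-/

open MeasureTheory Set

/-- The modified logarithm `𝓛ₘ(u)`. -/
noncomputable def modifiedLog (m : ℕ) (u : ℝ) : ℝ :=
  (-1) ^ m * (u - 1) ^ (-(m + 1 : ℤ)) *
    (Real.log u - ∑ j ∈ Finset.Icc 1 m, (-1) ^ (j + 1) * (u - 1) ^ j / j)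

open Filter Topology

noncomputable def logTaylorRemainder (m : ℕ) (t : ℝ) : ℝ :=
  Real.log (1 + t) - ∑ j ∈ Finset.Icc 1 m, (-1) ^ (j + 1) * t ^ j / j

@[simp]
lemma logTaylorRemainder_zero_right (m : ℕ) : logTaylorRemainder m 0 = 0 := by
  simp only [logTaylorRemainder, add_zero, Real.log_one, zero_sub, neg_eq_zero]
  refine Finset.sum_eq_zero fun j hj => ?_
  rw [zero_pow (by grind), mul_zero, zero_div]

lemma logTaylorRemainder_succ (m : ℕ) :
    logTaylorRemainder (m + 1) =
      logTaylorRemainder m + fun t : ℝ => (-1) ^ (m + 1) * t ^ (m + 1) / (m + 1) := by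
  ext t
  rw [Pi.add_apply, logTaylorRemainder, Finset.sum_Icc_succ_top (by omega), logTaylorRemainder]
  push_cast
  ring

lemma hasDerivAt_logTaylorRemainder (m : ℕ) {t : ℝ} (ht : 1 + t ≠ 0) :
    HasDerivAt (logTaylorRemainder m) ((-t) ^ m / (1 + t)) t := by
  induction m with
  | zero =>
    have hlog : logTaylorRemainder 0 = fun s => Real.log (1 + s) := by
      ext s
      simp [logTaylorRemainder]
    rw [hlog]
    simpa using ((hasDerivAt_id t).const_add 1).log ht
  | succ m ih =>
    have hterm : HasDerivAt (fun s : ℝ => (-1) ^ (m + 1) * s ^ (m + 1) / (m + 1))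
        ((-1) ^ (m + 1) * t ^ m) t :=
      (((hasDerivAt_pow (m + 1) t).const_mul _).div_const _).congr_deriv (by
        push_cast
        field_simp)
    rw [logTaylorRemainder_succ]
    refine (ih.add hterm).congr_deriv ?_
    rw [div_add' _ _ _ ht, pow_succ, neg_pow t, pow_succ]
    ring

lemma modifiedLog_eq_logTaylorRemainder (m : ℕ) (u : ℝ) :
    modifiedLog m u = (-1) ^ m * (u - 1) ^ (-(m + 1 : ℤ)) * logTaylorRemainder m (u - 1) := by
  rw [modifiedLog, logTaylorRemainder, add_sub_cancel]

lemma hasDerivAt_mul_div_add_one (a : ℝ) {x : ℝ} (hx : x + 1 ≠ 0) :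
    HasDerivAt (fun y => a * y / (y + 1)) (a / (x + 1) ^ 2) x :=
  (((hasDerivAt_id' x).const_mul a).fun_div ((hasDerivAt_id' x).add_const 1) hx).congr_deriv
    (by ring)

lemma tendsto_mul_div_add_one_atTop (a : ℝ) :
    Tendsto (fun y : ℝ => a * y / (y + 1)) atTop (𝓝 a) := by
  have hlim : Tendsto (fun y : ℝ => a - a / (y + 1)) atTop (𝓝 (a - 0)) :=
    tendsto_const_nhds.sub <|
      tendsto_const_nhds.div_atTop (tendsto_atTop_add_const_right _ 1 tendsto_id)
  rw [sub_zero] at hlim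
  refine hlim.congr' ?_
  filter_upwards [eventually_gt_atTop 0] with y hy
  field_simp
  ring

lemma one_add_mul_div_add_one (u : ℝ) {x : ℝ} (hx : x + 1 ≠ 0) :
    1 + (u - 1) * x / (x + 1) = (x * u + 1) / (x + 1) := by
  field_simp
  ring

lemma modifiedLog_integrand_eq (m : ℕ) {u x : ℝ} (hu : 0 ≤ u) (hu1 : u ≠ 1) (hx : 0 ≤ x) :
    (-1) ^ m * (u - 1) ^ (-(m + 1 : ℤ)) *
      ((-((u - 1) * x / (x + 1))) ^ m / (1 + (u - 1) * x / (x + 1)) * ((u - 1) / (x + 1) ^ 2)) =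
      x ^ m / ((x + 1) ^ (m + 1) * (x * u + 1)) := by
  have hx1 : x + 1 ≠ 0 := by positivity
  have hxu : x * u + 1 ≠ 0 := by positivity
  have hu1' : u - 1 ≠ 0 := sub_ne_zero.mpr hu1
  rw [one_add_mul_div_add_one u hx1, neg_pow ((u - 1) * x / (x + 1)), div_pow, mul_pow, zpow_neg,
    show ((m : ℤ) + 1) = ((m + 1 : ℕ) : ℤ) by push_cast; rfl, zpow_natCast]
  field_simp
  rw [← pow_mul, pow_mul', neg_one_sq, one_pow]
  ring

noncomputable def modifiedLogAntideriv (m : ℕ) (u x : ℝ) : ℝ :=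
  (-1) ^ m * (u - 1) ^ (-(m + 1 : ℤ)) * logTaylorRemainder m ((u - 1) * x / (x + 1))

section Antiderivative

variable (m : ℕ) {u : ℝ}

lemma modifiedLogAntideriv_zero_right : modifiedLogAntideriv m u 0 = 0 := by
  simp [modifiedLogAntideriv]

lemma hasDerivAt_modifiedLogAntideriv (hu : 0 ≤ u) (hu1 : u ≠ 1) {x : ℝ} (hx : 0 ≤ x) :
    HasDerivAt (modifiedLogAntideriv m u) (x ^ m / ((x + 1) ^ (m + 1) * (x * u + 1))) x := by
  have hx1 : x + 1 ≠ 0 := by positivity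
  have ht : 1 + (u - 1) * x / (x + 1) ≠ 0 := by
    rw [one_add_mul_div_add_one u hx1]
    positivity
  rw [← modifiedLog_integrand_eq m hu hu1 hx]
  exact ((hasDerivAt_logTaylorRemainder m ht).comp x
    (hasDerivAt_mul_div_add_one (u - 1) hx1)).const_mul _

lemma tendsto_modifiedLogAntideriv_atTop (hu : 0 < u) :
    Tendsto (modifiedLogAntideriv m u) atTop (𝓝 (modifiedLog m u)) := by
  have hcont : ContinuousAt (logTaylorRemainder m) (u - 1) :=
    (hasDerivAt_logTaylorRemainder m (by linarith : 1 + (u - 1) ≠ 0)).continuousAt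
  rw [modifiedLog_eq_logTaylorRemainder]
  exact (hcont.tendsto.comp (tendsto_mul_div_add_one_atTop (u - 1))).const_mul _

end Antiderivative

/-- The integral representation `𝓛ₘ(u) = ∫₀^∞ xᵐ/((x+1)^(m+1)(xu+1)) dx` for `u > 0`, `u ≠ 1`. -/
theorem modifiedLog_integral_rep (m : ℕ) (u : ℝ) (hu : 0 < u) (hu1 : u ≠ 1) :
    IntegrableOn (fun x : ℝ => x ^ m / ((x + 1) ^ (m + 1) * (x * u + 1))) (Ioi 0) ∧
    ∫ x in Ioi (0 : ℝ), x ^ m / ((x + 1) ^ (m + 1) * (x * u + 1)) = modifiedLog m u := by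
  have hderiv : ∀ x ∈ Ici (0 : ℝ), HasDerivAt (modifiedLogAntideriv m u)
      (x ^ m / ((x + 1) ^ (m + 1) * (x * u + 1))) x :=
    fun x hx => hasDerivAt_modifiedLogAntideriv m hu.le hu1 hx
  have hnonneg : ∀ x ∈ Ioi (0 : ℝ), 0 ≤ x ^ m / ((x + 1) ^ (m + 1) * (x * u + 1)) :=
    fun x hx => by have : 0 < x := hx; positivity
  have hlim := tendsto_modifiedLogAntideriv_atTop m hu
  refine ⟨integrableOn_Ioi_deriv_of_nonneg' hderiv hnonneg hlim, ?_⟩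
  rw [integral_Ioi_of_hasDerivAt_of_nonneg' hderiv hnonneg hlim, modifiedLogAntideriv_zero_right,
    sub_zero]
end

section
/- For every nonnegative integer m and all real numbers k > 0 and λ > 0 with λ ≠ 1, one has ∫₀^∞ k^(2m+2) uᵐ / ((k²u+1)^(m+1) (λk²u+1)) du = 𝓛_m(λ). -/
/-!
The substitution `t = k²u` removes `k`. Put `Iₘ = ∫₀^∞ tᵐ / ((t+1)^(m+1) (λt+1)) dt`. The partial
fraction identity
`t^(m+1) / ((t+1)^(m+2) (λt+1)) = (tᵐ / (t+1)^(m+2) - tᵐ / ((t+1)^(m+1) (λt+1))) / (λ-1)`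
and the Beta integral `∫₀^∞ tᵐ / (t+1)^(m+2) dt = 1/(m+1)` give
`I_(m+1) = (1/(m+1) - Iₘ) / (λ-1)`, the recurrence that `𝓛ₘ(λ)` also satisfies, and
`I₀ = log λ / (λ-1) = 𝓛₀(λ)`.
-/

open MeasureTheory Set

open Filter Topology

lemma modifiedLog_eq_div (m : ℕ) (u : ℝ) :
    modifiedLog m u = (-1) ^ m *
      (Real.log u - ∑ j ∈ Finset.Icc 1 m, (-1) ^ (j + 1) * (u - 1) ^ j / j) / (u - 1) ^ (m + 1) := by
  rw [modifiedLog, show -(m + 1 : ℤ) = -((m + 1 : ℕ) : ℤ) by push_cast; ring, zpow_neg,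
    zpow_natCast, div_eq_mul_inv, mul_right_comm]

lemma modifiedLog_zero (u : ℝ) : modifiedLog 0 u = Real.log u / (u - 1) := by
  simp [modifiedLog_eq_div]

lemma modifiedLog_succ (m : ℕ) {u : ℝ} (hu : u ≠ 1) :
    modifiedLog (m + 1) u = (((m : ℝ) + 1)⁻¹ - modifiedLog m u) / (u - 1) := by
  have hu' : u - 1 ≠ 0 := sub_ne_zero.mpr hu
  rw [modifiedLog_eq_div, modifiedLog_eq_div, Finset.sum_Icc_succ_top (by omega)]
  field_simp
  push_cast
  ring_nf
  rw [show ((-1 : ℝ)) ^ (m * 2) = 1 from Even.neg_one_pow ⟨m, by ring⟩]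
  ring

lemma tendsto_inv_add_one_atTop : Tendsto (fun t : ℝ => (t + 1)⁻¹) atTop (𝓝 0) :=
  tendsto_inv_atTop_zero.comp (tendsto_atTop_add_const_right _ 1 tendsto_id)

lemma one_sub_inv_add_one_eq {x : ℝ} (hx : x + 1 ≠ 0) : 1 - (x + 1)⁻¹ = x / (x + 1) := by
  field_simp
  ring

lemma hasDerivAt_one_sub_inv_add_one_pow (m : ℕ) {x : ℝ} (hx : x + 1 ≠ 0) :
    HasDerivAt (fun t : ℝ => (1 - (t + 1)⁻¹) ^ (m + 1) / (m + 1))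
      (x ^ m / (x + 1) ^ (m + 2)) x := by
  refine ((((hasDerivAt_id' x).add_const 1).fun_inv hx).const_sub 1 |>.fun_pow (m + 1)
    |>.div_const ((m : ℝ) + 1)).congr_deriv ?_
  rw [Nat.add_sub_cancel, one_sub_inv_add_one_eq hx, div_pow]
  push_cast
  field_simp
  ring

lemma tendsto_one_sub_inv_add_one_pow_div (m : ℕ) :
    Tendsto (fun t : ℝ => (1 - (t + 1)⁻¹) ^ (m + 1) / (m + 1)) atTop (𝓝 ((m + 1 : ℝ)⁻¹)) := by
  simpa using ((tendsto_inv_add_one_atTop.const_sub 1).pow (m + 1)).div_const ((m : ℝ) + 1)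

theorem integrableOn_pow_div_add_one_pow (m : ℕ) :
    IntegrableOn (fun t : ℝ => t ^ m / (t + 1) ^ (m + 2)) (Ioi 0) :=
  integrableOn_Ioi_deriv_of_nonneg'
    (fun x (hx : 0 ≤ x) => hasDerivAt_one_sub_inv_add_one_pow m (by positivity))
    (fun x (hx : 0 < x) => by positivity) (tendsto_one_sub_inv_add_one_pow_div m)

theorem integral_pow_div_add_one_pow (m : ℕ) :
    ∫ t in Ioi (0 : ℝ), t ^ m / (t + 1) ^ (m + 2) = ((m : ℝ) + 1)⁻¹ := by
  rw [integral_Ioi_of_hasDerivAt_of_nonneg'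
    (fun x (hx : 0 ≤ x) => hasDerivAt_one_sub_inv_add_one_pow m (by positivity))
    (fun x (hx : 0 < x) => by positivity) (tendsto_one_sub_inv_add_one_pow_div m)]
  simp

section

variable {lam : ℝ}

lemma add_mul_inv_add_one_eq {x : ℝ} (hx : x + 1 ≠ 0) :
    lam + (1 - lam) * (x + 1)⁻¹ = (lam * x + 1) / (x + 1) := by
  field_simp
  ring

lemma hasDerivAt_log_add_mul_inv_add_one (hlam1 : lam ≠ 1) {x : ℝ} (hx : x + 1 ≠ 0)
    (hx' : lam * x + 1 ≠ 0) :
    HasDerivAt (fun t : ℝ => Real.log (lam + (1 - lam) * (t + 1)⁻¹) / (lam - 1))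
      (1 / ((x + 1) * (lam * x + 1))) x := by
  have hne : lam + (1 - lam) * (x + 1)⁻¹ ≠ 0 := by
    rw [add_mul_inv_add_one_eq hx]; exact div_ne_zero hx' hx
  refine (((((hasDerivAt_id' x).add_const 1).fun_inv hx).const_mul (1 - lam)).const_add lam
    |>.log hne |>.div_const (lam - 1)).congr_deriv ?_
  rw [add_mul_inv_add_one_eq hx]
  have : lam - 1 ≠ 0 := sub_ne_zero.mpr hlam1
  field_simp
  ring

lemma tendsto_log_add_mul_inv_add_one (hlam : 0 < lam) :
    Tendsto (fun t : ℝ => Real.log (lam + (1 - lam) * (t + 1)⁻¹) / (lam - 1)) atTop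
      (𝓝 (Real.log lam / (lam - 1))) := by
  have h := (tendsto_inv_add_one_atTop.const_mul (1 - lam)).const_add lam
  rw [mul_zero, add_zero] at h
  exact ((Real.continuousAt_log hlam.ne').tendsto.comp h).div_const _

theorem integrableOn_one_div_add_one_mul (hlam : 0 < lam) (hlam1 : lam ≠ 1) :
    IntegrableOn (fun t : ℝ => 1 / ((t + 1) * (lam * t + 1))) (Ioi 0) :=
  integrableOn_Ioi_deriv_of_nonneg'
    (fun x (hx : 0 ≤ x) => hasDerivAt_log_add_mul_inv_add_one hlam1 (by positivity)
      (by positivity))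
    (fun x (hx : 0 < x) => by positivity) (tendsto_log_add_mul_inv_add_one hlam)

theorem integral_one_div_add_one_mul (hlam : 0 < lam) (hlam1 : lam ≠ 1) :
    ∫ t in Ioi (0 : ℝ), 1 / ((t + 1) * (lam * t + 1)) = Real.log lam / (lam - 1) := by
  rw [integral_Ioi_of_hasDerivAt_of_nonneg'
    (fun x (hx : 0 ≤ x) => hasDerivAt_log_add_mul_inv_add_one hlam1 (by positivity)
      (by positivity))
    (fun x (hx : 0 < x) => by positivity) (tendsto_log_add_mul_inv_add_one hlam)]
  simp

theorem integrableOn_pow_div_add_one_pow_mul (m : ℕ) (hlam : 0 < lam) (hlam1 : lam ≠ 1) :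
    IntegrableOn (fun t : ℝ => t ^ m / ((t + 1) ^ (m + 1) * (lam * t + 1))) (Ioi 0) := by
  refine (integrableOn_one_div_add_one_mul hlam hlam1).mono'
    (Measurable.aestronglyMeasurable (by fun_prop)) ?_
  filter_upwards [ae_restrict_mem measurableSet_Ioi] with t (ht : 0 < t)
  calc ‖t ^ m / ((t + 1) ^ (m + 1) * (lam * t + 1))‖
      = (t / (t + 1)) ^ m * (1 / ((t + 1) * (lam * t + 1))) := by
        rw [Real.norm_of_nonneg (by positivity), div_pow]
        field_simp
        ring
    _ ≤ 1 / ((t + 1) * (lam * t + 1)) :=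
        mul_le_of_le_one_left (by positivity)
          (pow_le_one₀ (by positivity) ((div_le_one (by positivity)).2 (by linarith)))

lemma pow_succ_div_eq_div_sub_div (m : ℕ) (hlam1 : lam ≠ 1) {t : ℝ} (ht : t + 1 ≠ 0)
    (ht' : lam * t + 1 ≠ 0) :
    t ^ (m + 1) / ((t + 1) ^ (m + 1 + 1) * (lam * t + 1)) =
      (t ^ m / (t + 1) ^ (m + 2) - t ^ m / ((t + 1) ^ (m + 1) * (lam * t + 1))) / (lam - 1) := by
  rw [eq_div_iff (sub_ne_zero.mpr hlam1), div_sub_div _ _ (by positivity) (by positivity),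
    div_mul_eq_mul_div, div_eq_div_iff (by positivity) (by positivity)]
  ring

theorem integral_pow_succ_div_add_one_pow_mul (m : ℕ) (hlam : 0 < lam) (hlam1 : lam ≠ 1) :
    ∫ t in Ioi (0 : ℝ), t ^ (m + 1) / ((t + 1) ^ (m + 1 + 1) * (lam * t + 1)) =
      (((m : ℝ) + 1)⁻¹ - ∫ t in Ioi (0 : ℝ), t ^ m / ((t + 1) ^ (m + 1) * (lam * t + 1))) /
        (lam - 1) := by
  rw [setIntegral_congr_fun measurableSet_Ioi fun t (ht : 0 < t) =>
      pow_succ_div_eq_div_sub_div m hlam1 (by positivity) (by positivity),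
    integral_div, integral_sub (integrableOn_pow_div_add_one_pow m)
      (integrableOn_pow_div_add_one_pow_mul m hlam hlam1), integral_pow_div_add_one_pow]

theorem integral_pow_div_add_one_pow_mul (m : ℕ) (hlam : 0 < lam) (hlam1 : lam ≠ 1) :
    ∫ t in Ioi (0 : ℝ), t ^ m / ((t + 1) ^ (m + 1) * (lam * t + 1)) = modifiedLog m lam := by
  induction m with
  | zero => simpa [modifiedLog_zero] using integral_one_div_add_one_mul hlam hlam1
  | succ m ih =>
    rw [integral_pow_succ_div_add_one_pow_mul m hlam hlam1, ih, modifiedLog_succ m hlam1]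

end

/-- The scalar form of the Connes–Tretkoff integration lemma:
`∫₀^∞ k^(2m+2) uᵐ / ((k²u+1)^(m+1)(λk²u+1)) du = 𝓛ₘ(λ)`. -/
theorem connes_tretkoff_scalar_integral (m : ℕ) (k lam : ℝ) (hk : 0 < k)
    (hlam : 0 < lam) (hlam1 : lam ≠ 1) :
    ∫ u in Ioi (0 : ℝ),
      k ^ (2 * m + 2) * u ^ m / ((k ^ 2 * u + 1) ^ (m + 1) * (lam * k ^ 2 * u + 1)) =
      modifiedLog m lam := by
  set f : ℝ → ℝ := fun t => t ^ m / ((t + 1) ^ (m + 1) * (lam * t + 1))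
  have hk2 : 0 < k ^ 2 := by positivity
  have hscale : ∀ u : ℝ, k ^ (2 * m + 2) * u ^ m /
      ((k ^ 2 * u + 1) ^ (m + 1) * (lam * k ^ 2 * u + 1)) = k ^ 2 * f (k ^ 2 * u) := by
    intro u
    simp only [f]
    ring
  simp_rw [hscale]
  rw [integral_const_mul, ← smul_eq_mul, integral_comp_mul_left_Ioi' f 0 hk2, mul_zero]
  exact integral_pow_div_add_one_pow_mul m hlam hlam1
end

section
/- There exists a real-analytic function H on ℝ such that H(x) = h(x) for every real x ≠ 0; that is, the singularity of h at x = 0 is removable and h extends to a real-analytic function on all of ℝ. -/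
/-!
Writing `t = e^{x/2}`, the numerator of `h` is `-e^x N(x)` with
`N(x) = 2 sinh(3x/2) - 6 sinh x - 6 sinh(x/2) + 6x`, whose derivatives of order `< 4` vanish
at `0`, so `N(x) = x⁴ g(x)` with `g` entire. The denominator is `6 x⁴ q(x)⁴ (t + 1)²` with
`q(x) = (e^{x/2} - 1)/x` entire and nowhere zero, so `-e^x g / (6 q⁴ (t + 1)²)` is the extension.
-/

/-- The function `h`. -/
noncomputable def hCT (x : ℝ) : ℝ :=
  -(Real.exp (-x / 2) *
      (-1 + 3 * Real.exp (x / 2) + 3 * Real.exp x + 6 * Real.exp (3 * x / 2) * x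
        - 3 * Real.exp (2 * x) - 3 * Real.exp (5 * x / 2) + Real.exp (3 * x))) /
    (6 * (Real.exp (x / 2) - 1) ^ 4 * (Real.exp (x / 2) + 1) ^ 2)

open Filter Topology Real

section RemovableZero

variable {𝕜 E : Type*} [NontriviallyNormedField 𝕜] [NormedAddCommGroup E] [NormedSpace 𝕜 E]
  {f g : 𝕜 → E} {U : Set 𝕜} {z₀ : 𝕜} {n : ℕ}

theorem AnalyticOnNhd.exists_eq_pow_smul_of_eventuallyEq (hf : AnalyticOnNhd 𝕜 f U)
    (hg : AnalyticAt 𝕜 g z₀) (hfg : ∀ᶠ z in 𝓝 z₀, f z = (z - z₀) ^ n • g z) :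
    ∃ G : 𝕜 → E, AnalyticOnNhd 𝕜 G U ∧ G z₀ = g z₀ ∧ ∀ z, f z = (z - z₀) ^ n • G z := by
  classical
  set G : 𝕜 → E := Function.update (fun z => ((z - z₀) ^ n)⁻¹ • f z) z₀ (g z₀)
  have hG : ∀ z ≠ z₀, G z = ((z - z₀) ^ n)⁻¹ • f z := fun z hz => Function.update_of_ne hz _ _
  have hpow : ∀ z ≠ z₀, (z - z₀) ^ n ≠ 0 := fun z hz => pow_ne_zero _ (sub_ne_zero.2 hz)
  refine ⟨G, fun z hz => ?_, Function.update_self .., fun z => ?_⟩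
  · rcases eq_or_ne z z₀ with rfl | hz₀
    · refine hg.congr ?_
      filter_upwards [hfg] with w hw
      rcases eq_or_ne w z with rfl | hw'
      · simp [G]
      · rw [hG w hw', hw, smul_smul, inv_mul_cancel₀ (hpow w hw'), one_smul]
    · refine ((((analyticAt_id.sub analyticAt_const).pow n).inv (hpow z hz₀)).smul
        (hf z hz)).congr ?_
      filter_upwards [isOpen_ne.mem_nhds hz₀] with w hw
      exact (hG w hw).symm
  · rcases eq_or_ne z z₀ with rfl | hz
    · simpa [G] using hfg.self_of_nhds
    · rw [hG z hz, smul_smul, mul_inv_cancel₀ (hpow z hz), one_smul]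

theorem AnalyticOnNhd.exists_eq_pow_smul_of_natCast_le_analyticOrderAt
    (hf : AnalyticOnNhd 𝕜 f U) (hz₀ : z₀ ∈ U) (hn : n ≤ analyticOrderAt f z₀) :
    ∃ G : 𝕜 → E, AnalyticOnNhd 𝕜 G U ∧ ∀ z, f z = (z - z₀) ^ n • G z := by
  obtain ⟨g, hg, hfg⟩ := (natCast_le_analyticOrderAt (hf z₀ hz₀)).1 hn
  obtain ⟨G, hG, -, hfG⟩ := hf.exists_eq_pow_smul_of_eventuallyEq hg hfg
  exact ⟨G, hG, hfG⟩

theorem AnalyticOnNhd.exists_eq_pow_smul_of_analyticOrderAt_eq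
    (hf : AnalyticOnNhd 𝕜 f U) (hz₀ : z₀ ∈ U) (hn : analyticOrderAt f z₀ = n) :
    ∃ G : 𝕜 → E, AnalyticOnNhd 𝕜 G U ∧ G z₀ ≠ 0 ∧ ∀ z, f z = (z - z₀) ^ n • G z := by
  obtain ⟨g, hg, hg₀, hfg⟩ := (hf z₀ hz₀).analyticOrderAt_eq_natCast.1 hn
  obtain ⟨G, hG, hGg, hfG⟩ := hf.exists_eq_pow_smul_of_eventuallyEq hg hfg
  exact ⟨G, hG, hGg ▸ hg₀, hfG⟩

end RemovableZero

/-- `e^x * hCTNumerator x` is minus the numerator of `hCT x`. The exponents are written as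
`c * x` so that `iteratedDeriv_exp_const_mul` applies. -/
noncomputable def hCTNumerator (x : ℝ) : ℝ :=
  exp (3 / 2 * x) - 3 * exp (1 * x) - 3 * exp (1 / 2 * x) + x * 6
    + 3 * exp (-1 / 2 * x) + 3 * exp (-1 * x) - exp (-3 / 2 * x)

theorem analyticOnNhd_hCTNumerator : AnalyticOnNhd ℝ hCTNumerator Set.univ := fun x _ => by
  unfold hCTNumerator
  fun_prop

theorem four_le_analyticOrderAt_hCTNumerator : 4 ≤ analyticOrderAt hCTNumerator 0 := by
  rw [← Nat.cast_ofNat, natCast_le_analyticOrderAt_iff_iteratedDeriv_eq_zero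
    (analyticOnNhd_hCTNumerator 0 (Set.mem_univ 0))]
  intro i hi
  unfold hCTNumerator
  interval_cases i <;>
    simp (disch := fun_prop) only [iteratedDeriv_fun_add, iteratedDeriv_fun_sub,
      iteratedDeriv_const_mul_field, iteratedDeriv_mul_const_field, iteratedDeriv_exp_const_mul,
      iteratedDeriv_fun_id] <;>
    norm_num

theorem exists_hCTNumerator_eq_pow_mul :
    ∃ g : ℝ → ℝ, AnalyticOnNhd ℝ g Set.univ ∧ ∀ x, hCTNumerator x = x ^ 4 * g x := by
  simpa using analyticOnNhd_hCTNumerator.exists_eq_pow_smul_of_natCast_le_analyticOrderAt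
    (Set.mem_univ 0) four_le_analyticOrderAt_hCTNumerator

theorem analyticOrderAt_exp_half_sub_one : analyticOrderAt (fun x => exp (x / 2) - 1) 0 = 1 := by
  have hderiv : HasDerivAt (fun x => exp (x / 2) - 1) (1 / 2) 0 := by
    simpa using (((hasDerivAt_id (0 : ℝ)).div_const 2).exp).sub_const 1
  exact AnalyticAt.analyticOrderAt_eq_one_of_zero_deriv_ne_zero (by fun_prop) (by simp)
    (by simp [hderiv.deriv])

theorem exists_exp_half_sub_one_eq_mul :
    ∃ q : ℝ → ℝ, AnalyticOnNhd ℝ q Set.univ ∧ (∀ x, q x ≠ 0) ∧ ∀ x, exp (x / 2) - 1 = x * q x := by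
  obtain ⟨q, hq, hq₀, hfq⟩ := AnalyticOnNhd.exists_eq_pow_smul_of_analyticOrderAt_eq
    (fun x _ => by fun_prop) (Set.mem_univ 0) analyticOrderAt_exp_half_sub_one
  simp only [sub_zero, pow_one, smul_eq_mul] at hfq
  refine ⟨q, hq, fun x => ?_, hfq⟩
  rcases eq_or_ne x 0 with rfl | hx
  · exact hq₀
  · refine right_ne_zero_of_mul (hfq x ▸ sub_ne_zero.2 ?_)
    rw [Ne, exp_eq_one_iff]
    exact div_ne_zero hx two_ne_zero

theorem hCT_eq_hCTNumerator_div (x : ℝ) :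
    hCT x = -(exp x * hCTNumerator x) / (6 * (exp (x / 2) - 1) ^ 4 * (exp (x / 2) + 1) ^ 2) := by
  have hmul : ∀ y a b, y * exp a * exp b = y * exp (a + b) := fun y a b => by
    rw [mul_assoc, exp_add]
  unfold hCT hCTNumerator
  congr 2
  ring_nf
  simp only [← exp_add, hmul, sq]
  ring_nf

/-- The singularity of `h` at `x = 0` is removable: `h` extends to a real-analytic
function on all of `ℝ`. -/
theorem hCT_extends_analytic :
    ∃ H : ℝ → ℝ, (∀ x : ℝ, AnalyticAt ℝ H x) ∧ ∀ x : ℝ, x ≠ 0 → H x = hCT x := by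
  obtain ⟨g, hg, hg_eq⟩ := exists_hCTNumerator_eq_pow_mul
  obtain ⟨q, hq, hq_ne, hq_eq⟩ := exists_exp_half_sub_one_eq_mul
  refine ⟨fun x => -(exp x * g x) / (6 * q x ^ 4 * (exp (x / 2) + 1) ^ 2), fun x => ?_,
    fun x hx => ?_⟩
  · have hgx := hg x (Set.mem_univ x)
    have hqx := hq x (Set.mem_univ x)
    exact AnalyticAt.div (by fun_prop) (by fun_prop) (by have := hq_ne x; positivity)
  · rw [hCT_eq_hCTNumerator_div, hg_eq, hq_eq]
    field_simp
end
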